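/- Let X be an F₂-valued random variable, Z a random variable with values in a finite set, and (S1,S2) a pair of {0,1}-valued random variables with the pair (S1,S2) independent of (X,Z). Define Y1 = S1·X and Y2 = S2·X. Then H[(Y1,Y2) | (Z,S1,S2)] = P(S1=1 or S2=1)·H[X | Z]. -/

import Mathlib

/-!
Condition on the state `s = (s₁, s₂)` as well as on `Z`. When some state is on, the observed
pair is an injective image of `X`, so it carries the entropy of `X`; when both are off it is the
constant `(0, 0)` and carries none. Since the states are independent of `(X, Z)`, conditioning
`X` on them as well does not change its conditional law given `Z`, and averaging over the states
leaves `P(S₁ = 1 ∨ S₂ = 1) · H[X | Z]`.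
-/

open Finset
open scoped Classical

/-- Probability of an event under a probability mass function on a finite sample space. -/
noncomputable def pr {Ω : Type} [Fintype Ω] (p : Ω → ℝ) (E : Ω → Prop) : ℝ :=
  ∑ ω, if E ω then p ω else 0

/-- Conditional Shannon entropy `H[X | Y] = Σ_y P(Y=y) · H[X | Y=y]`
(natural logarithm), for finite-valued random variables on a finite sample space. -/
noncomputable def condEnt {Ω : Type} [Fintype Ω] {α β : Type} [Fintype α] [Fintype β]
    (p : Ω → ℝ) (X : Ω → α) (Y : Ω → β) : ℝ :=
  ∑ y : β, pr p (fun ω => Y ω = y) *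
    ∑ x : α, Real.negMulLog
      (pr p (fun ω => X ω = x ∧ Y ω = y) / pr p (fun ω => Y ω = y))

open Function Real

section Probability

variable {Ω : Type} [Fintype Ω] (p : Ω → ℝ)

theorem pr_congr {E F : Ω → Prop} (h : ∀ ω, E ω ↔ F ω) : pr p E = pr p F :=
  sum_congr rfl fun ω _ => if_congr (h ω) rfl rfl

theorem pr_eq_zero_of_forall_not {E : Ω → Prop} (h : ∀ ω, ¬ E ω) : pr p E = 0 :=
  sum_eq_zero fun ω _ => if_neg (h ω)

theorem pr_eq_sum_fiber {α : Type} [Fintype α] (X : Ω → α) (E : Ω → Prop) :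
    pr p E = ∑ x, pr p (fun ω => X ω = x ∧ E ω) := by
  unfold pr
  rw [sum_comm]
  refine sum_congr rfl fun ω _ => ?_
  by_cases h : E ω <;> simp [h]

theorem pr_comp_eq_sum {σ : Type} [Fintype σ] (S : Ω → σ) (T : σ → Prop) :
    pr p (fun ω => T (S ω)) = ∑ s, if T s then pr p (fun ω => S ω = s) else 0 := by
  rw [pr_eq_sum_fiber p S]
  refine sum_congr rfl fun s _ => ?_
  split_ifs with hT
  · exact pr_congr p fun ω => ⟨And.left, fun hs => ⟨hs, hs ▸ hT⟩⟩
  · exact pr_eq_zero_of_forall_not p fun ω ⟨hs, hTs⟩ => hT (hs ▸ hTs)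

end Probability

section EntropyGiven

variable {Ω α : Type} [Fintype Ω] [Fintype α] (p : Ω → ℝ)

/-- `H[W | E]`, the entropy of `W` under the law conditioned on the event `E`. -/
noncomputable def entropyGiven (W : Ω → α) (E : Ω → Prop) : ℝ :=
  ∑ a, negMulLog (pr p (fun ω => W ω = a ∧ E ω) / pr p E)

theorem condEnt_eq_sum_entropyGiven {β : Type} [Fintype β] (X : Ω → α) (Y : Ω → β) :
    condEnt p X Y = ∑ y, pr p (fun ω => Y ω = y) * entropyGiven p X (fun ω => Y ω = y) :=
  rfl

theorem entropyGiven_eq_zero_of_const {W : Ω → α} {E : Ω → Prop} (c : α)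
    (h : ∀ ω, E ω → W ω = c) : entropyGiven p W E = 0 := by
  unfold entropyGiven
  rw [sum_eq_single c]
  · rw [pr_congr p fun ω => ⟨And.right, fun hE => ⟨h ω hE, hE⟩⟩]
    rcases eq_or_ne (pr p E) 0 with h0 | h0
    · simp [h0]
    · simp [div_self h0]
  · intro a _ hac
    rw [pr_eq_zero_of_forall_not p fun ω ⟨hW, hE⟩ => hac (hW ▸ h ω hE)]
    simp
  · simp

theorem entropyGiven_eq_of_injective {β : Type} [Fintype β] {W : Ω → β} {X : Ω → α}
    {E : Ω → Prop} {g : α → β} (hg : Injective g) (h : ∀ ω, E ω → W ω = g (X ω)) :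
    entropyGiven p W E = entropyGiven p X E := by
  refine (sum_of_injOn g hg.injOn (by simp) (fun b _ hb => ?_) fun a _ => ?_).symm
  · rw [pr_eq_zero_of_forall_not p fun ω ⟨hW, hE⟩ =>
      hb ⟨X ω, by simp, (hW ▸ h ω hE).symm⟩]
    simp
  · have hfiber : ∀ ω, W ω = g a ∧ E ω ↔ X ω = a ∧ E ω := fun ω =>
      ⟨fun ⟨hW, hE⟩ => ⟨hg (by rw [← h ω hE, hW]), hE⟩,
        fun ⟨hX, hE⟩ => ⟨by rw [h ω hE, hX], hE⟩⟩
    rw [pr_congr p hfiber]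

end EntropyGiven

section Independence

variable {Ω α γ σ : Type} [Fintype Ω] (p : Ω → ℝ)

def IndepOfPair (S : Ω → σ) (X : Ω → α) (Z : Ω → γ) : Prop :=
  ∀ s x z, pr p (fun ω => S ω = s ∧ X ω = x ∧ Z ω = z)
    = pr p (fun ω => S ω = s) * pr p (fun ω => X ω = x ∧ Z ω = z)

variable (X : Ω → α) (Z : Ω → γ) (S : Ω → σ)

theorem pr_joint_eq_mul_of_indep
    (hindep : IndepOfPair p S X Z) (z : γ) (s : σ) (x : α) :
    pr p (fun ω => X ω = x ∧ (Z ω, S ω) = (z, s))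
      = pr p (fun ω => S ω = s) * pr p (fun ω => X ω = x ∧ Z ω = z) := by
  rw [← hindep]
  exact pr_congr p fun ω => by simp only [Prod.mk.injEq]; tauto

theorem pr_pair_eq_mul_of_indep [Fintype α]
    (hindep : IndepOfPair p S X Z) (z : γ) (s : σ) :
    pr p (fun ω => (Z ω, S ω) = (z, s))
      = pr p (fun ω => S ω = s) * pr p (fun ω => Z ω = z) := by
  rw [pr_eq_sum_fiber p X, pr_eq_sum_fiber p X (fun ω => Z ω = z), mul_sum]
  exact sum_congr rfl fun x _ => pr_joint_eq_mul_of_indep p X Z S hindep z s x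

theorem mul_entropyGiven_pair_of_indep [Fintype α]
    (hindep : IndepOfPair p S X Z) (z : γ) (s : σ) :
    pr p (fun ω => (Z ω, S ω) = (z, s)) * entropyGiven p X (fun ω => (Z ω, S ω) = (z, s))
      = pr p (fun ω => S ω = s) *
        (pr p (fun ω => Z ω = z) * entropyGiven p X (fun ω => Z ω = z)) := by
  rw [pr_pair_eq_mul_of_indep p X Z S hindep, mul_assoc]
  rcases eq_or_ne (pr p (fun ω => S ω = s)) 0 with hs | hs
  · simp [hs]
  · unfold entropyGiven
    simp only [pr_joint_eq_mul_of_indep p X Z S hindep, pr_pair_eq_mul_of_indep p X Z S hindep,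
      mul_div_mul_left _ _ hs]

theorem condEnt_channel_of_indep [Fintype α] [Fintype γ] [Fintype σ] {β : Type} [Fintype β]
    (g : σ → α → β) (T : σ → Prop)
    (hinj : ∀ s, T s → Injective (g s)) (hconst : ∀ s, ¬ T s → ∃ c, ∀ x, g s x = c)
    (hindep : IndepOfPair p S X Z) :
    condEnt p (fun ω => g (S ω) (X ω)) (fun ω => (Z ω, S ω))
      = pr p (fun ω => T (S ω)) * condEnt p X Z := by
  rw [condEnt_eq_sum_entropyGiven, Fintype.sum_prod_type, sum_comm, pr_comp_eq_sum, sum_mul]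
  refine sum_congr rfl fun s _ => ?_
  split_ifs with hT
  · rw [condEnt_eq_sum_entropyGiven, mul_sum]
    refine sum_congr rfl fun z _ => ?_
    rw [entropyGiven_eq_of_injective p (hinj s hT) fun ω hω => by rw [(Prod.mk.inj hω).2],
      mul_entropyGiven_pair_of_indep p X Z S hindep]
  · obtain ⟨c, hc⟩ := hconst s hT
    rw [zero_mul]
    refine sum_eq_zero fun z _ => ?_
    rw [entropyGiven_eq_zero_of_const p c fun ω hω => by rw [(Prod.mk.inj hω).2, hc], mul_zero]

end Independence

theorem erasurePair_injective {M : Type} [Zero M] {s₁ s₂ : Bool}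
    (hs : s₁ = true ∨ s₂ = true) :
    Injective fun x : M => ((if s₁ then x else 0), (if s₂ then x else 0)) := by
  rcases hs with rfl | rfl
  · exact fun x y hxy => (Prod.mk.inj hxy).1
  · exact fun x y hxy => (Prod.mk.inj hxy).2

theorem erasure_pair_condEntropy_general {Ω γ : Type} [Fintype Ω] [Fintype γ]
    (p : Ω → ℝ)
    (X : Ω → ZMod 2) (Z : Ω → γ) (S1 S2 : Ω → Bool)
    (hindep : ∀ (s1 s2 : Bool) (x : ZMod 2) (z : γ),
      pr p (fun ω => (S1 ω = s1 ∧ S2 ω = s2) ∧ X ω = x ∧ Z ω = z)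
        = pr p (fun ω => S1 ω = s1 ∧ S2 ω = s2) *
          pr p (fun ω => X ω = x ∧ Z ω = z)) :
    condEnt p
        (fun ω => ((if S1 ω then X ω else 0 : ZMod 2),
                   (if S2 ω then X ω else 0 : ZMod 2)))
        (fun ω => (Z ω, S1 ω, S2 ω))
      = pr p (fun ω => S1 ω = true ∨ S2 ω = true) * condEnt p X Z := by
  have hindep_pair : IndepOfPair p (fun ω => (S1 ω, S2 ω)) X Z := by
    rintro ⟨s1, s2⟩ x z
    simpa only [Prod.mk.injEq] using hindep s1 s2 x z
  refine condEnt_channel_of_indep p X Z (fun ω => (S1 ω, S2 ω))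
    (fun s x => ((if s.1 then x else 0), (if s.2 then x else 0)))
    (fun s => s.1 = true ∨ s.2 = true) (fun _ => erasurePair_injective) ?_ hindep_pair
  rintro ⟨s1, s2⟩ hs
  simp only [not_or, Bool.not_eq_true] at hs
  exact ⟨(0, 0), fun x => by simp [hs.1, hs.2]⟩

/-- For a pair of erasure channels `Y1 = S1·X`, `Y2 = S2·X` with states `(S1,S2)`
independent of `(X,Z)`, `H[(Y1,Y2) | (Z,S1,S2)] = P(S1=1 or S2=1) · H[X | Z]`. -/
theorem erasure_pair_condEntropy {Ω γ : Type} [Fintype Ω] [Fintype γ]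
    (p : Ω → ℝ) (hp : ∀ ω, 0 ≤ p ω) (hsum : ∑ ω, p ω = 1)
    (X : Ω → ZMod 2) (Z : Ω → γ) (S1 S2 : Ω → Bool)
    (hindep : ∀ (s1 s2 : Bool) (x : ZMod 2) (z : γ),
      pr p (fun ω => (S1 ω = s1 ∧ S2 ω = s2) ∧ X ω = x ∧ Z ω = z)
        = pr p (fun ω => S1 ω = s1 ∧ S2 ω = s2) *
          pr p (fun ω => X ω = x ∧ Z ω = z)) :
    condEnt p
        (fun ω => ((if S1 ω then X ω else 0 : ZMod 2),
                   (if S2 ω then X ω else 0 : ZMod 2)))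
        (fun ω => (Z ω, S1 ω, S2 ω))
      = pr p (fun ω => S1 ω = true ∨ S2 ω = true) * condEnt p X Z :=
  erasure_pair_condEntropy_general p X Z S1 S2 hindep
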